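/- arXiv:2006.14063 — 2 statements merged into one kernel-verified Lean document; each statement's English description precedes it below -/
import Mathlib

section
/- Weighting vector of a subset via Schur complement: let Y ⊆ X be finite subsets of ℝⁿ, and order the points of X so that those of Y come first, writing ζ_X = [[ζ_Y, ζ_{Y,Ȳ}],[ζ_{Y,Ȳ}ᵀ, ζ_{Ȳ}]] where Ȳ = X \ Y. Then w_X = [w_Y; 0] + ρ 𝟙 and Mag(X) = Mag(Y) + 𝟙ᵀ ρ 𝟙, where ρ = ρ_{ζ_X ζ_Y} is the block matrix built from ζ_Y⁻¹ and the Schur complement (ζ_X/ζ_Y)⁻¹ as in the block inverse formula. -/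
/-!
Everything rests on the positive definiteness of `ζ_X`, after which the weighting identities
are the block inverse formula applied to `ζ_X⁻¹ 𝟙`.

Positive definiteness comes from subordination: for `a ≥ 0`,
`√π e^{-a} = ∫₀^∞ e^{-s} e^{-a²/(4s)} s^{-1/2} ds`, which is checked by showing that the right
side `F` satisfies `F' = -F` (the substitution `s ↦ a²/(4s)` turns `F'` back into `-F`).
So `e^{-‖x - y‖}` is a positive mixture of the Gaussian kernels `e^{-t‖x - y‖²}`, which are
positive semidefinite: `e^{-t‖x‖²} e^{-t‖y‖²} e^{2t⟪x, y⟫}` is a diagonal congruence of the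
entrywise exponential of a Gram matrix, and entrywise powers of a positive semidefinite matrix
are positive semidefinite by the Schur product theorem. Strictness: as `t → ∞` the Gaussian
kernel of distinct points tends to the identity, so for `c ≠ 0` the integrand of `cᵀ ζ_X c`
is positive for all small `s`.
-/

open Matrix Real Filter Topology Set MeasureTheory
open scoped ComplexOrder Nat

namespace Matrix

variable {ι m n α : Type*}

section Exp

variable [Fintype ι]

theorem dotProduct_mulVec_eq_sum_sum [NonUnitalSemiring α] (x y : ι → α) (M : Matrix ι ι α) :
    x ⬝ᵥ (M *ᵥ y) = ∑ i, ∑ j, x i * M i j * y j := by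
  simp only [dotProduct, mulVec, Finset.mul_sum, mul_assoc]

theorem PosSemidef.map_pow {𝕜 : Type*} [RCLike 𝕜] {A : Matrix ι ι 𝕜} (hA : A.PosSemidef)
    (k : ℕ) : (A.map (· ^ k)).PosSemidef := by
  induction k with
  | zero => simpa [vecMulVec, map] using posSemidef_vecMulVec_self_star (fun _ : ι => (1 : 𝕜))
  | succ k ih =>
    convert ih.hadamard hA using 1
    ext i j
    simp [pow_succ]

theorem PosSemidef.map_exp {A : Matrix ι ι ℝ} (hA : A.PosSemidef) :
    (A.map Real.exp).PosSemidef := by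
  refine .of_dotProduct_mulVec_nonneg (IsHermitian.ext fun i j => ?_) fun x => ?_
  · simp [← hA.isHermitian.apply i j]
  have hsum : HasSum (fun k : ℕ => ∑ i, ∑ j, star x i * (A i j ^ k / k !) * x j)
      (∑ i, ∑ j, star x i * Real.exp (A i j) * x j) :=
    hasSum_sum fun i _ => hasSum_sum fun j _ => by
      simpa only [Real.exp_eq_exp_ℝ] using
        ((NormedSpace.expSeries_div_hasSum_exp (A i j)).mul_left (star x i)).mul_right (x j)
  rw [dotProduct_mulVec_eq_sum_sum]
  refine hsum.nonneg fun k => ?_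
  have hk := (hA.map_pow k).dotProduct_mulVec_nonneg x
  rw [dotProduct_mulVec_eq_sum_sum] at hk
  convert mul_nonneg (inv_nonneg.mpr (Nat.cast_nonneg (k !))) hk using 1
  simp only [Finset.mul_sum, map_apply]
  exact Finset.sum_congr rfl fun i _ => Finset.sum_congr rfl fun j _ => by ring

end Exp

section Blocks

variable [Fintype m] [Fintype n]

theorem fromBlocks_zero_mulVec [NonUnitalNonAssocSemiring α] (A : Matrix m m α) (v : m ⊕ n → α) :
    fromBlocks A 0 0 (0 : Matrix n n α) *ᵥ v = Sum.elim (A *ᵥ (v ∘ Sum.inl)) 0 := by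
  ext (i | i) <;> simp [fromBlocks_mulVec]

theorem inv_fromBlocks_eq_add_of_isUnit₁₁ [DecidableEq m] [DecidableEq n] [CommRing α]
    {A : Matrix m m α} {B : Matrix m n α} {C : Matrix n m α} {D : Matrix n n α} (hA : IsUnit A)
    (hM : IsUnit (fromBlocks A B C D)) :
    (fromBlocks A B C D)⁻¹ = fromBlocks A⁻¹ 0 0 0 +
      fromBlocks (A⁻¹ * B * (D - C * A⁻¹ * B)⁻¹ * C * A⁻¹) (-(A⁻¹ * B * (D - C * A⁻¹ * B)⁻¹))
        (-((D - C * A⁻¹ * B)⁻¹ * C * A⁻¹)) (D - C * A⁻¹ * B)⁻¹ := by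
  let := hA.invertible
  let := (isUnit_fromBlocks_iff_of_invertible₁₁.mp hM).invertible
  let := hM.invertible
  rw [← invOf_eq_nonsing_inv, invOf_fromBlocks₁₁_eq, fromBlocks_add]
  simp only [invOf_eq_nonsing_inv, zero_add]

end Blocks

end Matrix

theorem integral_comp_div_Ioi {E : Type*} [NormedAddCommGroup E] [NormedSpace ℝ E]
    (g : ℝ → E) {c : ℝ} (hc : 0 < c) :
    ∫ x in Ioi 0, (c / x ^ 2) • g (c / x) = ∫ x in Ioi 0, g x := by
  have himage : (c / ·) '' Ioi (0 : ℝ) = Ioi 0 := by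
    refine (image_subset_iff.mpr fun x (hx : 0 < x) => div_pos hc hx).antisymm
      fun y (hy : 0 < y) => ⟨c / y, div_pos hc hy, div_div_cancel₀ hc.ne'⟩
  have hderiv : ∀ x ∈ Ioi (0 : ℝ), HasDerivWithinAt (c / ·) (-(c / x ^ 2)) (Ioi 0) x := by
    intro x (hx : 0 < x)
    simpa [div_eq_mul_inv] using ((hasDerivAt_inv hx.ne').const_mul c).hasDerivWithinAt
  have hinj : InjOn (c / ·) (Ioi (0 : ℝ)) := fun x _ y _ h => by
    simpa [hc.ne'] using congrArg (c / ·) h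
  conv_rhs => rw [← himage, integral_image_eq_integral_abs_deriv_smul measurableSet_Ioi hderiv hinj]
  refine setIntegral_congr_fun measurableSet_Ioi fun x (hx : 0 < x) => ?_
  rw [abs_neg, abs_of_pos (by positivity)]

theorem setIntegral_Ioi_pos_of_eventually_pos {f : ℝ → ℝ} {a : ℝ} (hf : IntegrableOn f (Ioi a))
    (hf₀ : ∀ x ∈ Ioi a, 0 ≤ f x) (hpos : ∀ᶠ x in 𝓝[>] a, 0 < f x) :
    0 < ∫ x in Ioi a, f x := by
  obtain ⟨b, hab, hb⟩ := mem_nhdsGT_iff_exists_Ioo_subset.mp hpos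
  rw [setIntegral_pos_iff_support_of_nonneg_ae (ae_restrict_of_forall_mem measurableSet_Ioi hf₀) hf]
  calc 0 < volume (Ioo a b) := by simpa using hab
    _ ≤ volume (Function.support f ∩ Ioi a) := measure_mono fun x hx => ⟨(hb hx).ne', hx.1⟩

section Subordination

noncomputable def subordinationIntegrand (a s : ℝ) : ℝ :=
  exp (-s) * exp (-(a ^ 2 / (4 * s))) / √s

theorem subordinationIntegrand_nonneg (a s : ℝ) : 0 ≤ subordinationIntegrand a s := by
  unfold subordinationIntegrand
  positivity

theorem subordinationIntegrand_zero (s : ℝ) : subordinationIntegrand 0 s = exp (-s) / √s := by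
  simp [subordinationIntegrand]

theorem subordinationIntegrand_zero_eq_rpow {s : ℝ} (hs : 0 < s) :
    subordinationIntegrand 0 s = exp (-s) * s ^ ((1 : ℝ) / 2 - 1) := by
  rw [subordinationIntegrand_zero, sqrt_eq_rpow, div_eq_mul_inv (exp _), ← rpow_neg hs.le]
  norm_num

theorem norm_subordinationIntegrand_le (a : ℝ) {s : ℝ} (hs : 0 ≤ s) :
    ‖subordinationIntegrand a s‖ ≤ subordinationIntegrand 0 s := by
  rw [norm_of_nonneg (subordinationIntegrand_nonneg a s), subordinationIntegrand_zero,
    subordinationIntegrand]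
  gcongr
  exact mul_le_of_le_one_right (exp_nonneg _) (exp_le_one_iff.mpr (neg_nonpos.mpr (by positivity)))

theorem continuousOn_subordinationIntegrand (a : ℝ) :
    ContinuousOn (subordinationIntegrand a) (Ioi 0) := by
  intro s (hs : 0 < s)
  have : 4 * s ≠ 0 := by positivity
  have : √s ≠ 0 := (sqrt_pos.mpr hs).ne'
  refine ContinuousAt.continuousWithinAt ?_
  unfold subordinationIntegrand
  fun_prop (disch := assumption)

theorem integrableOn_subordinationIntegrand (a : ℝ) :
    IntegrableOn (subordinationIntegrand a) (Ioi 0) := by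
  have hΓ : IntegrableOn (subordinationIntegrand 0) (Ioi 0) :=
    (GammaIntegral_convergent one_half_pos).congr_fun
      (fun s hs => (subordinationIntegrand_zero_eq_rpow hs).symm) measurableSet_Ioi
  refine hΓ.mono'
    ((continuousOn_subordinationIntegrand a).aestronglyMeasurable measurableSet_Ioi) ?_
  filter_upwards [ae_restrict_mem measurableSet_Ioi] with s (hs : 0 < s)
  exact norm_subordinationIntegrand_le a hs.le

theorem integral_subordinationIntegrand_zero :
    ∫ s in Ioi 0, subordinationIntegrand 0 s = √π := by
  rw [← Gamma_one_half_eq, Gamma_eq_integral one_half_pos]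
  exact setIntegral_congr_fun measurableSet_Ioi fun s hs => subordinationIntegrand_zero_eq_rpow hs

theorem continuous_integral_subordinationIntegrand :
    Continuous fun a => ∫ s in Ioi 0, subordinationIntegrand a s := by
  refine continuous_of_dominated
    (fun a => (continuousOn_subordinationIntegrand a).aestronglyMeasurable measurableSet_Ioi)
    (fun a => ?_) (integrableOn_subordinationIntegrand 0) (.of_forall fun s => ?_)
  · filter_upwards [ae_restrict_mem measurableSet_Ioi] with s (hs : 0 < s)
    exact norm_subordinationIntegrand_le a hs.le
  · unfold subordinationIntegrand
    fun_prop

theorem hasDerivAt_subordinationIntegrand {s : ℝ} (hs : 0 < s) (b : ℝ) :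
    HasDerivAt (subordinationIntegrand · s) (-(b / (2 * s) * subordinationIntegrand b s)) b := by
  have h := (((hasDerivAt_pow 2 b).div_const (4 * s)).fun_neg.exp.const_mul (exp (-s))).div_const √s
  refine h.congr_deriv ?_
  unfold subordinationIntegrand
  field_simp
  ring

theorem integral_div_mul_subordinationIntegrand {a : ℝ} (ha : 0 < a) :
    ∫ s in Ioi 0, a / (2 * s) * subordinationIntegrand a s =
      ∫ s in Ioi 0, subordinationIntegrand a s := by
  rw [← integral_comp_div_Ioi _ (by positivity : 0 < a ^ 2 / 4)]
  refine setIntegral_congr_fun measurableSet_Ioi fun s (hs : 0 < s) => ?_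
  have hexp : a ^ 2 / (4 * (a ^ 2 / 4 / s)) = s := by field_simp
  have hsqrt : √(a ^ 2 / 4 / s) = a / 2 / √s := by
    rw [sqrt_div' _ hs.le, sqrt_div' _ (by norm_num), sqrt_sq ha.le,
      show (4 : ℝ) = 2 ^ 2 by norm_num, sqrt_sq (by norm_num)]
  have : √s ≠ 0 := (sqrt_pos.mpr hs).ne'
  simp only [subordinationIntegrand, smul_eq_mul, hexp, hsqrt]
  rw [show a ^ 2 / 4 / s = a ^ 2 / (4 * s) by ring]
  field_simp
  rw [sq_sqrt hs.le]

theorem div_mul_subordinationIntegrand_le {b s : ℝ} (hb : 0 < b) (hs : 0 < s) :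
    b / (2 * s) * subordinationIntegrand b s ≤ 2 / b * subordinationIntegrand 0 s := by
  set u := b ^ 2 / (4 * s)
  have hu : b / (2 * s) = 2 / b * u := by
    simp only [u]
    field_simp
    ring
  have hue : u * exp (-u) ≤ 1 := by
    rw [exp_neg, ← div_eq_mul_inv, div_le_one (exp_pos u)]
    linarith [add_one_le_exp u]
  rw [hu, subordinationIntegrand_zero, subordinationIntegrand]
  calc 2 / b * u * (exp (-s) * exp (-u) / √s) = 2 / b * (exp (-s) / √s) * (u * exp (-u)) := by
        ring
    _ ≤ 2 / b * (exp (-s) / √s) := mul_le_of_le_one_right (by positivity) hue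

theorem hasDerivAt_integral_subordinationIntegrand {a : ℝ} (ha : 0 < a) :
    HasDerivAt (fun b => ∫ s in Ioi 0, subordinationIntegrand b s)
      (-∫ s in Ioi 0, subordinationIntegrand a s) a := by
  have hmeas (b : ℝ) : AEStronglyMeasurable (subordinationIntegrand b) (volume.restrict (Ioi 0)) :=
    (continuousOn_subordinationIntegrand b).aestronglyMeasurable measurableSet_Ioi
  have hmeas' : AEStronglyMeasurable (fun s => -(a / (2 * s) * subordinationIntegrand a s))
      (volume.restrict (Ioi 0)) :=
    ((continuousOn_const.div (continuousOn_const.mul continuousOn_id) fun s (hs : 0 < s) =>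
      mul_ne_zero two_ne_zero hs.ne').mul
        (continuousOn_subordinationIntegrand a)).neg.aestronglyMeasurable measurableSet_Ioi
  have hbound : ∀ᵐ s ∂volume.restrict (Ioi 0), ∀ b ∈ Metric.ball a (a / 2),
      ‖-(b / (2 * s) * subordinationIntegrand b s)‖ ≤ 4 / a * subordinationIntegrand 0 s := by
    filter_upwards [ae_restrict_mem measurableSet_Ioi] with s (hs : 0 < s) b hb
    have hb' : a / 2 < b := by
      rw [Metric.mem_ball, dist_eq, abs_lt] at hb
      linarith
    have hb₀ : 0 < b := by linarith
    rw [norm_neg, norm_of_nonneg (mul_nonneg (div_pos hb₀ (by linarith)).le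
      (subordinationIntegrand_nonneg _ _))]
    calc b / (2 * s) * subordinationIntegrand b s ≤ 2 / b * subordinationIntegrand 0 s :=
          div_mul_subordinationIntegrand_le hb₀ hs
      _ ≤ 4 / a * subordinationIntegrand 0 s := by
          gcongr ?_ * _
          · exact subordinationIntegrand_nonneg 0 s
          rw [div_le_div_iff₀ hb₀ ha]
          linarith
  have hdiff : ∀ᵐ s ∂volume.restrict (Ioi 0), ∀ b ∈ Metric.ball a (a / 2),
      HasDerivAt (subordinationIntegrand · s) (-(b / (2 * s) * subordinationIntegrand b s)) b := by
    filter_upwards [ae_restrict_mem measurableSet_Ioi] with s (hs : 0 < s) b _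
    exact hasDerivAt_subordinationIntegrand hs b
  obtain ⟨-, h⟩ := hasDerivAt_integral_of_dominated_loc_of_deriv_le
    (Metric.ball_mem_nhds a (half_pos ha)) (.of_forall hmeas)
    (integrableOn_subordinationIntegrand a) hmeas' hbound
    ((integrableOn_subordinationIntegrand 0).const_mul (4 / a)) hdiff
  rwa [← integral_div_mul_subordinationIntegrand ha, ← integral_neg]

theorem integral_subordinationIntegrand {a : ℝ} (ha : 0 ≤ a) :
    ∫ s in Ioi 0, subordinationIntegrand a s = √π * exp (-a) := by
  obtain rfl | ha := ha.eq_or_lt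
  · simp [integral_subordinationIntegrand_zero]
  set F := fun b => ∫ s in Ioi 0, subordinationIntegrand b s
  obtain ⟨c, -, hc⟩ := exists_hasDerivAt_eq_slope (fun b => exp b * F b) (fun _ => 0) ha
    (continuous_exp.mul continuous_integral_subordinationIntegrand).continuousOn
    fun b hb => ((hasDerivAt_exp b).fun_mul
      (hasDerivAt_integral_subordinationIntegrand hb.1)).congr_deriv (by ring)
  have hconst : exp a * F a = exp 0 * F 0 := by
    rw [eq_comm, div_eq_zero_iff, sub_eq_zero] at hc
    exact hc.resolve_right (by simpa using ha.ne')
  rw [exp_zero, one_mul, show F 0 = √π from integral_subordinationIntegrand_zero] at hconst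
  rw [exp_neg, eq_mul_inv_iff_mul_eq₀ (exp_ne_zero a), mul_comm, hconst]

end Subordination

section Kernels

variable {ι : Type*}

theorem posSemidef_exp_neg_mul_dist_sq [Fintype ι] {E : Type*} [NormedAddCommGroup E]
    [InnerProductSpace ℝ E] (p : ι → E) {t : ℝ} (ht : 0 ≤ t) :
    (of fun i j => exp (-(t * dist (p i) (p j) ^ 2))).PosSemidef := by
  classical
  have hG : (((2 * t) • gram ℝ p).map Real.exp).PosSemidef :=
    ((posSemidef_gram ℝ p).smul (by positivity)).map_exp
  convert hG.conjTranspose_mul_mul_same (diagonal fun i => exp (-(t * ‖p i‖ ^ 2))) using 1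
  ext i j
  simp only [of_apply, diagonal_conjTranspose, star_trivial, diagonal_mul, mul_diagonal,
    map_apply, Matrix.smul_apply, gram_apply, smul_eq_mul, ← Real.exp_add, dist_eq_norm,
    norm_sub_sq_real]
  ring_nf

theorem tendsto_exp_neg_mul_dist_sq_atTop [DecidableEq ι] {X : Type*} [MetricSpace X]
    {p : ι → X} (hp : p.Injective) :
    Tendsto (fun t : ℝ => of fun i j => exp (-(t * dist (p i) (p j) ^ 2))) atTop (𝓝 1) := by
  refine tendsto_pi_nhds.mpr fun i => tendsto_pi_nhds.mpr fun j => ?_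
  obtain rfl | hij := eq_or_ne i j
  · simp
  · have hd : 0 < dist (p i) (p j) ^ 2 := pow_pos (dist_pos.mpr (hp.ne hij)) 2
    simp only [of_apply, one_apply_ne hij]
    exact tendsto_exp_neg_atTop_nhds_zero.comp (tendsto_id.atTop_mul_const hd)

theorem eventually_dotProduct_mulVec_exp_neg_mul_dist_sq_pos [Fintype ι] {X : Type*}
    [MetricSpace X] {p : ι → X} (hp : p.Injective) {x : ι → ℝ} (hx : x ≠ 0) :
    ∀ᶠ t in atTop, 0 < x ⬝ᵥ ((of fun i j => exp (-(t * dist (p i) (p j) ^ 2))) *ᵥ x) := by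
  classical
  have hcont : Continuous fun M : Matrix ι ι ℝ => x ⬝ᵥ (M *ᵥ x) :=
    continuous_const.dotProduct (continuous_id.matrix_mulVec continuous_const)
  have h := (hcont.tendsto 1).comp (tendsto_exp_neg_mul_dist_sq_atTop hp)
  rw [one_mulVec] at h
  exact h.eventually_const_lt (by simpa using dotProduct_star_self_pos_iff.mpr hx)

theorem dotProduct_mulVec_exp_neg_dist_eq_integral [Fintype ι] {X : Type*}
    [PseudoMetricSpace X] (p : ι → X) (x : ι → ℝ) :
    x ⬝ᵥ ((of fun i j => exp (-dist (p i) (p j))) *ᵥ x) = (√π)⁻¹ *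
      ∫ s in Ioi 0, ∑ i, ∑ j, x i * subordinationIntegrand (dist (p i) (p j)) s * x j := by
  have hint (i j : ι) :
      IntegrableOn (fun s => x i * subordinationIntegrand (dist (p i) (p j)) s * x j) (Ioi 0) :=
    ((integrableOn_subordinationIntegrand _).const_mul _).mul_const _
  rw [dotProduct_mulVec_eq_sum_sum, integral_finsetSum _ fun i _ =>
    integrable_finsetSum _ fun j _ => hint i j, Finset.mul_sum]
  refine Finset.sum_congr rfl fun i _ => ?_
  rw [integral_finsetSum _ fun j _ => hint i j, Finset.mul_sum]
  refine Finset.sum_congr rfl fun j _ => ?_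
  rw [integral_mul_const, integral_const_mul, integral_subordinationIntegrand dist_nonneg, of_apply]
  field_simp

theorem posDef_exp_neg_dist [Fintype ι] {E : Type*} [NormedAddCommGroup E]
    [InnerProductSpace ℝ E] {p : ι → E} (hp : p.Injective) :
    (of fun i j => exp (-dist (p i) (p j))).PosDef := by
  refine posDef_iff_dotProduct_mulVec.mpr
    ⟨IsHermitian.ext fun i j => by simp [dist_comm], fun x hx => ?_⟩
  rw [star_trivial, dotProduct_mulVec_exp_neg_dist_eq_integral]
  set Q : ℝ → ℝ := fun s => ∑ i, ∑ j, x i * subordinationIntegrand (dist (p i) (p j)) s * x j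
  set G : ℝ → Matrix ι ι ℝ := fun t => of fun i j => exp (-(t * dist (p i) (p j) ^ 2))
  have hQG (s : ℝ) : Q s = exp (-s) / √s * (x ⬝ᵥ (G (4 * s)⁻¹ *ᵥ x)) := by
    simp only [Q, G, dotProduct_mulVec_eq_sum_sum, Finset.mul_sum, subordinationIntegrand, of_apply]
    refine Finset.sum_congr rfl fun i _ => Finset.sum_congr rfl fun j _ => ?_
    rw [div_eq_inv_mul (_ ^ 2)]
    ring
  have hQ_nonneg : ∀ s ∈ Ioi (0 : ℝ), 0 ≤ Q s := fun s (hs : 0 < s) => by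
    have hG := (posSemidef_exp_neg_mul_dist_sq p (t := (4 * s)⁻¹)
      (by positivity)).dotProduct_mulVec_nonneg x
    rw [star_trivial] at hG
    rw [hQG]
    positivity
  have hQ_pos : ∀ᶠ s in 𝓝[>] 0, 0 < Q s := by
    have ht : Tendsto (fun s : ℝ => (4 * s)⁻¹) (𝓝[>] 0) atTop := by
      simpa only [mul_inv] using
        tendsto_inv_nhdsGT_zero.const_mul_atTop (by norm_num : (0 : ℝ) < 4⁻¹)
    filter_upwards [ht.eventually (eventually_dotProduct_mulVec_exp_neg_mul_dist_sq_pos hp hx),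
      self_mem_nhdsWithin] with s hs (hs₀ : 0 < s)
    rw [hQG]
    exact mul_pos (div_pos (exp_pos _) (sqrt_pos.mpr hs₀)) hs
  exact mul_pos (by positivity) (setIntegral_Ioi_pos_of_eventually_pos
    (integrable_finsetSum _ fun _ _ => integrable_finsetSum _ fun _ _ =>
      ((integrableOn_subordinationIntegrand _).const_mul _).mul_const _) hQ_nonneg hQ_pos)

end Kernels

/-- Weighting vector of a subset via Schur complement. The points of
`X ⊂ ℝⁿ` are indexed by `Fin k ⊕ Fin l`, with those of `Y` (indexed by `Fin k`) first, so
`ζ_X = [[ζ_Y, B], [Bᵀ, ζ_Ȳ]]`. With `ρ = ρ_{ζ_X ζ_Y}` built from `ζ_Y⁻¹` and the Schur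
complement `(ζ_X / ζ_Y)⁻¹`, one has `w_X = [w_Y; 0] + ρ 𝟙` and
`Mag X = Mag Y + 𝟙ᵀ ρ 𝟙`. -/
theorem weighting_subset_schur (n k l : ℕ)
    (q : Fin k ⊕ Fin l → EuclideanSpace ℝ (Fin n)) (hq : Function.Injective q) :
    let ζX : Matrix (Fin k ⊕ Fin l) (Fin k ⊕ Fin l) ℝ :=
      Matrix.of fun a b => Real.exp (-dist (q a) (q b))
    let ζY : Matrix (Fin k) (Fin k) ℝ :=
      Matrix.of fun i j => Real.exp (-dist (q (Sum.inl i)) (q (Sum.inl j)))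
    let B : Matrix (Fin k) (Fin l) ℝ :=
      Matrix.of fun i j => Real.exp (-dist (q (Sum.inl i)) (q (Sum.inr j)))
    let ζYbar : Matrix (Fin l) (Fin l) ℝ :=
      Matrix.of fun i j => Real.exp (-dist (q (Sum.inr i)) (q (Sum.inr j)))
    let S : Matrix (Fin l) (Fin l) ℝ := ζYbar - Bᵀ * ζY⁻¹ * B
    let ρ : Matrix (Fin k ⊕ Fin l) (Fin k ⊕ Fin l) ℝ :=
      Matrix.fromBlocks (ζY⁻¹ * B * S⁻¹ * Bᵀ * ζY⁻¹) (-(ζY⁻¹ * B * S⁻¹))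
        (-(S⁻¹ * Bᵀ * ζY⁻¹)) S⁻¹
    (ζX⁻¹ *ᵥ fun _ => (1 : ℝ))
        = Sum.elim (ζY⁻¹ *ᵥ fun _ => (1 : ℝ)) 0 + (ρ *ᵥ fun _ => (1 : ℝ)) ∧
    (∑ a, (ζX⁻¹ *ᵥ fun _ => (1 : ℝ)) a)
        = (∑ i, (ζY⁻¹ *ᵥ fun _ => (1 : ℝ)) i)
          + (fun _ => (1 : ℝ)) ⬝ᵥ (ρ *ᵥ fun _ => (1 : ℝ)) := by
  intro ζX ζY B ζYbar S ρ
  have hX : ζX.PosDef := posDef_exp_neg_dist hq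
  have hY : ζY.PosDef := posDef_exp_neg_dist (hq.comp Sum.inl_injective)
  have hblocks : ζX = fromBlocks ζY B Bᵀ ζYbar := by
    ext (i | i) (j | j) <;> simp [ζX, ζY, B, ζYbar, dist_comm]
  have hinv : ζX⁻¹ = fromBlocks ζY⁻¹ 0 0 0 + ρ := by
    rw [hblocks] at hX ⊢
    exact inv_fromBlocks_eq_add_of_isUnit₁₁ hY.isUnit hX.isUnit
  have hw : (ζX⁻¹ *ᵥ fun _ => (1 : ℝ)) =
      Sum.elim (ζY⁻¹ *ᵥ fun _ => (1 : ℝ)) 0 + (ρ *ᵥ fun _ => (1 : ℝ)) := by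
    rw [hinv, add_mulVec, fromBlocks_zero_mulVec]
    rfl
  refine ⟨hw, ?_⟩
  rw [hw]
  simp [Fintype.sum_sum_type, dotProduct, Finset.sum_add_distrib]
end

section
/- Gluing formula for weighting vectors of a disjoint decomposition: let X ⊂ ℝⁿ be finite and Y ⊂ X nonempty with Ȳ = X \ Y. Then the restriction of w_X to Y satisfies w_X|_Y = (ζ_X/ζ_{Ȳ})⁻¹ (𝟙_Y - ζ_{Y,Ȳ} w_{Ȳ}), and the restriction to Ȳ satisfies w_X|_{Ȳ} = (ζ_X/ζ_Y)⁻¹ (𝟙_{Ȳ} - ζ_{Y,Ȳ}ᵀ w_Y). -/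
/-!
Writing `ζ_X w_X = 𝟙` blockwise gives `ζ_Y a + B b = 𝟙` and `Bᵀ a + ζ_Ȳ b = 𝟙` for the two
restrictions `a`, `b` of `w_X`; eliminating `b` (resp. `a`) through the second (resp. first)
equation leaves the Schur complement applied to `a` (resp. `b`). The only real input is
invertibility: `ζ_X` is positive definite, hence so are its principal blocks, and
`det ζ_X = det ζ_Ȳ · det (ζ_X / ζ_Ȳ)` makes the Schur complements invertible.

Positive definiteness of the Laplace kernel `exp (-‖x - y‖)` comes from the subordination formula
`exp (-s) = 2 / √π · ∫₀^∞ exp (-t²) exp (-s² / (4 t²)) dt`, which writes it as a positive mixture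
of Gaussian kernels. A Gaussian kernel is strictly positive definite because its quadratic form is
a positive multiple of `∫ g²` for the Gaussian sum `g y = ∑ vᵢ exp (-2b ‖y - xᵢ‖²)`, and `g ≠ 0`
by Dedekind's independence of the characters `y ↦ exp ⟪y, 2b xᵢ⟫`.
-/

open Matrix Real Set MeasureTheory

namespace Matrix

variable {m n α : Type*} [Fintype m] [Fintype n] [DecidableEq n] [CommRing α]
  {A : Matrix m m α} {B : Matrix m n α} {C : Matrix n m α} {D : Matrix n n α}

theorem isUnit_det_schur₂₂ [DecidableEq m] (hD : IsUnit D.det)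
    (hM : IsUnit (fromBlocks A B C D).det) : IsUnit (A - B * D⁻¹ * C).det := by
  let := D.invertibleOfIsUnitDet hD
  rw [det_fromBlocks₂₂, invOf_eq_nonsing_inv] at hM
  exact isUnit_of_mul_isUnit_right hM

theorem schur₂₂_mulVec_eq {x₁ y₁ : m → α} {x₂ y₂ : n → α} (hD : IsUnit D.det)
    (h₁ : A *ᵥ x₁ + B *ᵥ x₂ = y₁) (h₂ : C *ᵥ x₁ + D *ᵥ x₂ = y₂) :
    (A - B * D⁻¹ * C) *ᵥ x₁ = y₁ - B *ᵥ (D⁻¹ *ᵥ y₂) := by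
  have hx₂ : D⁻¹ *ᵥ y₂ = D⁻¹ *ᵥ (C *ᵥ x₁) + x₂ := by
    rw [← h₂, mulVec_add, mulVec_mulVec _ D⁻¹ D, nonsing_inv_mul _ hD, one_mulVec]
  rw [hx₂, ← h₁, sub_mulVec, ← mulVec_mulVec, ← mulVec_mulVec, mulVec_add]
  abel

theorem eq_inv_schur₂₂_mulVec [DecidableEq m] {x₁ y₁ : m → α} {x₂ y₂ : n → α}
    (hD : IsUnit D.det) (hM : IsUnit (fromBlocks A B C D).det)
    (h₁ : A *ᵥ x₁ + B *ᵥ x₂ = y₁) (h₂ : C *ᵥ x₁ + D *ᵥ x₂ = y₂) :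
    x₁ = (A - B * D⁻¹ * C)⁻¹ *ᵥ (y₁ - B *ᵥ (D⁻¹ *ᵥ y₂)) := by
  rw [← schur₂₂_mulVec_eq hD h₁ h₂, mulVec_mulVec, nonsing_inv_mul _ (isUnit_det_schur₂₂ hD hM),
    one_mulVec]

theorem eq_inv_schur₁₁_mulVec [DecidableEq m] {x₁ y₁ : m → α} {x₂ y₂ : n → α}
    (hA : IsUnit A.det) (hM : IsUnit (fromBlocks A B C D).det)
    (h₁ : A *ᵥ x₁ + B *ᵥ x₂ = y₁) (h₂ : C *ᵥ x₁ + D *ᵥ x₂ = y₂) :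
    x₂ = (D - C * A⁻¹ * B)⁻¹ *ᵥ (y₂ - C *ᵥ (A⁻¹ *ᵥ y₁)) := by
  have hM' : IsUnit (fromBlocks D C B A).det := by
    rwa [← fromBlocks_submatrix_sum_swap_sum_swap, ← Equiv.sumComm_apply,
      det_submatrix_equiv_self]
  exact eq_inv_schur₂₂_mulVec hA hM' (by rwa [add_comm]) (by rwa [add_comm])

end Matrix

section InnerProductSpace

variable {V : Type*} [NormedAddCommGroup V] [InnerProductSpace ℝ V]

/-- A character of `Multiplicative V`, so that Dedekind's `linearIndependent_monoidHom` applies. -/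
noncomputable def expInner (x : V) : Multiplicative V →* ℝ where
  toFun y := exp (inner ℝ y.toAdd x)
  map_one' := by simp
  map_mul' y z := by simp [inner_add_left, exp_add]

theorem expInner_injective : Function.Injective (expInner : V → Multiplicative V →* ℝ) := by
  intro x x' h
  have := congr($h (.ofAdd (x - x')))
  simp only [expInner, MonoidHom.coe_mk, OneHom.coe_mk, toAdd_ofAdd, exp_eq_exp] at this
  rw [← sub_eq_zero, ← inner_self_eq_zero (𝕜 := ℝ), inner_sub_right, this, sub_self]

theorem exists_sum_mul_exp_neg_mul_norm_sub_sq_ne_zero {ι : Type*} [Fintype ι] {x : ι → V}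
    (hx : Function.Injective x) {v : ι → ℝ} (hv : v ≠ 0) {b : ℝ} (hb : b ≠ 0) :
    ∃ y, ∑ i, v i * exp (-b * ‖y - x i‖ ^ 2) ≠ 0 := by
  by_contra! h
  -- `exp (-b ‖y‖²)` factors out of the sum, leaving the characters `expInner (2b • xᵢ)`
  have hchar : ∑ i, (v i * exp (-b * ‖x i‖ ^ 2)) • ⇑(expInner ((2 * b) • x i)) = 0 := by
    ext y
    have hterm : ∀ i, v i * exp (-b * ‖y.toAdd - x i‖ ^ 2) = exp (-b * ‖y.toAdd‖ ^ 2) *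
        ((v i * exp (-b * ‖x i‖ ^ 2)) * exp (inner ℝ y.toAdd ((2 * b) • x i))) := fun i ↦ by
      rw [mul_assoc, ← exp_add, mul_left_comm, ← exp_add, norm_sub_sq_real, real_inner_smul_right]
      ring_nf
    have hy := h y.toAdd
    simp only [hterm, ← Finset.mul_sum, mul_eq_zero, exp_ne_zero, false_or] at hy
    simpa [expInner] using hy
  have hli := (linearIndependent_monoidHom (Multiplicative V) ℝ).comp _
    (expInner_injective.comp ((smul_right_injective V (mul_ne_zero two_ne_zero hb)).comp hx))
  apply hv
  funext i
  simpa [exp_ne_zero] using Fintype.linearIndependent_iff.1 hli _ hchar i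

theorem exp_neg_mul_norm_sub_sq_mul_exp_neg_mul_norm_sub_sq (b : ℝ) (x x' y : V) :
    exp (-(2 * b) * ‖y - x‖ ^ 2) * exp (-(2 * b) * ‖y - x'‖ ^ 2) =
      exp (-b * ‖x - x'‖ ^ 2) * exp (-(4 * b) * ‖y - midpoint ℝ x x'‖ ^ 2) := by
  rw [← exp_add, ← exp_add]
  congr 1
  have h := parallelogram_law_with_norm ℝ (y - x) (y - x')
  rw [show y - x + (y - x') = (2 : ℝ) • (y - midpoint ℝ x x') by
      rw [midpoint_eq_smul_add, invOf_eq_inv]; module,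
    show y - x - (y - x') = x' - x by abel, norm_smul, norm_sub_rev x' x] at h
  simp only [Real.norm_ofNat] at h
  linear_combination b * h

end InnerProductSpace

section FiniteDimensional

variable {V : Type*} [NormedAddCommGroup V] [InnerProductSpace ℝ V] [FiniteDimensional ℝ V]
  [MeasurableSpace V] [BorelSpace V]

theorem integral_exp_neg_mul_sq_norm_pos {b : ℝ} (hb : 0 < b) :
    0 < ∫ y : V, exp (-b * ‖y‖ ^ 2) := by
  rw [GaussianFourier.integral_rexp_neg_mul_sq_norm hb]
  positivity

theorem integrable_exp_neg_mul_sq_norm {b : ℝ} (hb : 0 < b) :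
    Integrable fun y : V ↦ exp (-b * ‖y‖ ^ 2) :=
  .of_integral_ne_zero (integral_exp_neg_mul_sq_norm_pos hb).ne'

theorem integral_exp_neg_mul_norm_sub_sq_mul_exp_neg_mul_norm_sub_sq (b : ℝ) (x x' : V) :
    ∫ y, exp (-(2 * b) * ‖y - x‖ ^ 2) * exp (-(2 * b) * ‖y - x'‖ ^ 2) =
      (∫ y : V, exp (-(4 * b) * ‖y‖ ^ 2)) * exp (-b * ‖x - x'‖ ^ 2) := by
  simp_rw [exp_neg_mul_norm_sub_sq_mul_exp_neg_mul_norm_sub_sq b x x', integral_const_mul,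
    integral_sub_right_eq_self fun y : V ↦ exp (-(4 * b) * ‖y‖ ^ 2)]
  ring

theorem integrable_exp_neg_mul_norm_sub_sq_mul_exp_neg_mul_norm_sub_sq {b : ℝ} (hb : 0 < b)
    (x x' : V) :
    Integrable fun y ↦ exp (-(2 * b) * ‖y - x‖ ^ 2) * exp (-(2 * b) * ‖y - x'‖ ^ 2) := by
  simp_rw [exp_neg_mul_norm_sub_sq_mul_exp_neg_mul_norm_sub_sq b x x']
  exact ((integrable_exp_neg_mul_sq_norm (by positivity)).comp_sub_right _).const_mul _

theorem sum_sum_mul_exp_neg_mul_norm_sub_sq_pos {ι : Type*} [Fintype ι] {x : ι → V}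
    (hx : Function.Injective x) {v : ι → ℝ} (hv : v ≠ 0) {b : ℝ} (hb : 0 < b) :
    0 < ∑ i, ∑ j, v i * v j * exp (-b * ‖x i - x j‖ ^ 2) := by
  -- the quadratic form is, up to a positive constant, `∫ g²` for the Gaussian sum `g` below
  set g : V → ℝ := fun y ↦ ∑ i, v i * exp (-(2 * b) * ‖y - x i‖ ^ 2)
  have hsq : (fun y ↦ g y ^ 2) = fun y ↦ ∑ i, ∑ j,
      v i * v j * (exp (-(2 * b) * ‖y - x i‖ ^ 2) * exp (-(2 * b) * ‖y - x j‖ ^ 2)) := by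
    ext y
    simp only [g, sq, Finset.sum_mul_sum]
    exact Finset.sum_congr rfl fun i _ ↦ Finset.sum_congr rfl fun j _ ↦ by ring
  have hint : ∀ i j, Integrable fun y ↦
      v i * v j * (exp (-(2 * b) * ‖y - x i‖ ^ 2) * exp (-(2 * b) * ‖y - x j‖ ^ 2)) :=
    fun i j ↦ (integrable_exp_neg_mul_norm_sub_sq_mul_exp_neg_mul_norm_sub_sq hb _ _).const_mul _
  have hg_int : ∫ y, g y ^ 2 = (∫ y : V, exp (-(4 * b) * ‖y‖ ^ 2)) *
      ∑ i, ∑ j, v i * v j * exp (-b * ‖x i - x j‖ ^ 2) := by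
    rw [hsq, integral_finsetSum _ fun i _ ↦ integrable_finsetSum _ fun j _ ↦ hint i j]
    simp_rw [integral_finsetSum _ fun j _ ↦ hint _ j, integral_const_mul,
      integral_exp_neg_mul_norm_sub_sq_mul_exp_neg_mul_norm_sub_sq, Finset.mul_sum]
    exact Finset.sum_congr rfl fun i _ ↦ Finset.sum_congr rfl fun j _ ↦ by ring
  obtain ⟨y₀, hy₀⟩ :=
    exists_sum_mul_exp_neg_mul_norm_sub_sq_ne_zero hx hv (by positivity : 2 * b ≠ 0)
  have hg_cont : Continuous g := by fun_prop
  have hpos : 0 < ∫ y, g y ^ 2 :=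
    integral_pos_of_integrable_nonneg_nonzero (hg_cont.pow 2)
      (hsq ▸ integrable_finsetSum _ fun i _ ↦ integrable_finsetSum _ fun j _ ↦ hint i j)
      (fun y ↦ sq_nonneg (g y)) (pow_ne_zero 2 hy₀)
  rw [hg_int] at hpos
  exact pos_of_mul_pos_right hpos (integral_exp_neg_mul_sq_norm_pos (by positivity)).le

end FiniteDimensional

theorem image_const_div_Ioi_zero {c : ℝ} (hc : 0 < c) : (fun t ↦ c / t) '' Ioi 0 = Ioi 0 := by
  refine Subset.antisymm (image_subset_iff.2 fun t ht ↦ div_pos hc ht) fun t ht ↦ ?_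
  exact ⟨c / t, div_pos hc ht, div_div_cancel₀ hc.ne'⟩

theorem image_sub_const_div_Ioi_zero {c : ℝ} (hc : 0 < c) :
    (fun t ↦ t - c / t) '' Ioi 0 = univ := by
  refine eq_univ_of_forall fun w ↦ ?_
  -- the positive root of `t ^ 2 - w * t - c`
  set r := √(w ^ 2 + 4 * c)
  have hr : r ^ 2 = w ^ 2 + 4 * c := sq_sqrt (by positivity)
  have hwr : |w| < r := by
    rw [← sqrt_sq_eq_abs]; exact sqrt_lt_sqrt (sq_nonneg w) (by linarith)
  have ht : 0 < (w + r) / 2 := by linarith [neg_abs_le w]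
  refine ⟨(w + r) / 2, ht, ?_⟩
  have : c / ((w + r) / 2) = (r - w) / 2 := by
    rw [div_eq_iff ht.ne']; linear_combination (-1 / 4 : ℝ) * hr
  simp only [this]; ring

theorem hasDerivAt_const_div_id (c : ℝ) {t : ℝ} (ht : t ≠ 0) :
    HasDerivAt (fun t ↦ c / t) (-(c / t ^ 2)) t := by
  simpa [div_eq_mul_inv] using (hasDerivAt_inv ht).const_mul c

theorem strictMonoOn_sub_const_div {c : ℝ} (hc : 0 < c) :
    StrictMonoOn (fun t ↦ t - c / t) (Ioi 0) :=
  fun _ ha _ _ hab ↦ sub_lt_sub hab (div_lt_div_of_pos_left hc ha hab)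

theorem integrableOn_Ioi_exp_neg_sub_const_div_sq (c : ℝ) :
    IntegrableOn (fun t ↦ exp (-(t - c / t) ^ 2)) (Ioi 0) := by
  refine ((integrable_exp_neg_mul_sq one_pos).const_mul (exp (2 * c))).integrableOn.mono' ?_ ?_
  · exact (continuousOn_id.sub (continuousOn_const.div continuousOn_id fun t ht ↦ ht.ne')).pow 2
      |>.neg.rexp.aestronglyMeasurable measurableSet_Ioi
  · refine (ae_restrict_iff' measurableSet_Ioi).2 (.of_forall fun t ht ↦ ?_)
    rw [norm_of_nonneg (exp_pos _).le, ← exp_add]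
    refine exp_le_exp.2 ?_
    have hexpand : (t - c / t) ^ 2 = t ^ 2 - 2 * c + (c / t) ^ 2 := by
      field_simp [(show (0:ℝ) < t from ht).ne']; ring
    nlinarith [hexpand, sq_nonneg (c / t)]

theorem integral_Ioi_exp_neg_sub_const_div_sq {c : ℝ} (hc : 0 < c) :
    ∫ t in Ioi 0, exp (-(t - c / t) ^ 2) = √π / 2 := by
  -- Cauchy–Schlömilch: `t ↦ c / t` preserves `h` and turns `dt` into `c / t² dt`, while
  -- `t ↦ t - c / t` maps `(0, ∞)` onto `ℝ` with Jacobian `1 + c / t²`.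
  set h : ℝ → ℝ := fun t ↦ exp (-(t - c / t) ^ 2)
  have hinv : ∀ t ∈ Ioi (0 : ℝ), HasDerivWithinAt (fun t ↦ c / t) (-(c / t ^ 2)) (Ioi 0) t :=
    fun t ht ↦ (hasDerivAt_const_div_id c (ne_of_gt ht)).hasDerivWithinAt
  have hsub : ∀ t ∈ Ioi (0 : ℝ), HasDerivWithinAt (fun t ↦ t - c / t) (1 + c / t ^ 2) (Ioi 0) t :=
    fun t ht ↦ by
      simpa only [Pi.sub_def, sub_neg_eq_add] using
        ((hasDerivAt_id' t).sub (hasDerivAt_const_div_id c (ne_of_gt ht))).hasDerivWithinAt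
  have h_symm : ∀ t ∈ Ioi (0 : ℝ), |-(c / t ^ 2)| • h (c / t) = c / t ^ 2 * h t := fun t ht ↦ by
    simp only [h, smul_eq_mul, abs_neg, abs_of_pos (div_pos hc (pow_pos ht _)),
      div_div_cancel₀ hc.ne', ← neg_sub t (c / t), neg_sq]
  have h_int : IntegrableOn h (Ioi 0) := integrableOn_Ioi_exp_neg_sub_const_div_sq c
  have hinvInj : InjOn (fun t ↦ c / t) (Ioi 0) := fun _ _ _ _ hab ↦ by
    simpa [div_eq_mul_inv, hc.ne'] using hab
  have h_int' : IntegrableOn (fun t ↦ c / t ^ 2 * h t) (Ioi 0) := by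
    have := (integrableOn_image_iff_integrableOn_abs_deriv_smul measurableSet_Ioi hinv hinvInj h).1
      (by rwa [image_const_div_Ioi_zero hc])
    exact this.congr_fun h_symm measurableSet_Ioi
  have h_eq : ∫ t in Ioi 0, c / t ^ 2 * h t = ∫ t in Ioi 0, h t := by
    rw [← setIntegral_congr_fun measurableSet_Ioi h_symm,
      ← integral_image_eq_integral_abs_deriv_smul measurableSet_Ioi hinv hinvInj,
      image_const_div_Ioi_zero hc]
  have h_sum : ∫ t in Ioi 0, (h t + c / t ^ 2 * h t) = √π := by
    have hsubInj : InjOn (fun t ↦ t - c / t) (Ioi 0) := (strictMonoOn_sub_const_div hc).injOn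
    calc ∫ t in Ioi 0, (h t + c / t ^ 2 * h t)
        = ∫ t in Ioi 0, |1 + c / t ^ 2| • exp (-(t - c / t) ^ 2) := by
          refine setIntegral_congr_fun measurableSet_Ioi fun t ht ↦ ?_
          rw [smul_eq_mul, abs_of_pos (by positivity)]
          ring
      _ = ∫ w, exp (-w ^ 2) := by
          rw [← integral_image_eq_integral_abs_deriv_smul measurableSet_Ioi hsub hsubInj
              fun w ↦ exp (-w ^ 2),
            image_sub_const_div_Ioi_zero hc, setIntegral_univ]
      _ = √π := by simpa using integral_gaussian 1
  rw [integral_add h_int h_int', h_eq] at h_sum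
  linarith

theorem integrableOn_Ioi_exp_neg_sq_mul_exp_neg_inv_mul_sq (s : ℝ) :
    IntegrableOn (fun t ↦ exp (-t ^ 2) * exp (-(4 * t ^ 2)⁻¹ * s ^ 2)) (Ioi 0) := by
  refine (integrable_exp_neg_mul_sq one_pos).integrableOn.mono' (by fun_prop) ?_
  refine .of_forall fun t ↦ ?_
  rw [norm_of_nonneg (by positivity), ← exp_add]
  exact exp_le_exp.2
    (by nlinarith [inv_nonneg.2 (by positivity : (0 : ℝ) ≤ 4 * t ^ 2), sq_nonneg s])

theorem integral_Ioi_exp_neg_sq_mul_exp_neg_inv_mul_sq {s : ℝ} (hs : 0 ≤ s) :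
    ∫ t in Ioi 0, exp (-t ^ 2) * exp (-(4 * t ^ 2)⁻¹ * s ^ 2) = √π / 2 * exp (-s) := by
  rcases hs.eq_or_lt with rfl | hs
  · simpa using integral_gaussian_Ioi 1
  have h : ∀ t ∈ Ioi (0 : ℝ), exp (-t ^ 2) * exp (-(4 * t ^ 2)⁻¹ * s ^ 2) =
      exp (-s) * exp (-(t - s / 2 / t) ^ 2) := fun t ht ↦ by
    have ht : t ≠ 0 := ne_of_gt ht
    rw [← exp_add, ← exp_add]
    congr 1
    field_simp
    ring
  rw [setIntegral_congr_fun measurableSet_Ioi h, integral_const_mul,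
    integral_Ioi_exp_neg_sub_const_div_sq (by positivity)]
  ring

section Laplace

variable {V : Type*} [NormedAddCommGroup V] [InnerProductSpace ℝ V] [FiniteDimensional ℝ V]
  [MeasurableSpace V] [BorelSpace V]

theorem sum_sum_mul_exp_neg_norm_sub_pos {ι : Type*} [Fintype ι] {x : ι → V}
    (hx : Function.Injective x) {v : ι → ℝ} (hv : v ≠ 0) :
    0 < ∑ i, ∑ j, v i * v j * exp (-‖x i - x j‖) := by
  set F : ι → ι → ℝ → ℝ := fun i j t ↦
    v i * v j * (exp (-t ^ 2) * exp (-(4 * t ^ 2)⁻¹ * ‖x i - x j‖ ^ 2))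
  have hF_int : ∀ i j, IntegrableOn (F i j) (Ioi 0) := fun i j ↦
    (integrableOn_Ioi_exp_neg_sq_mul_exp_neg_inv_mul_sq _).const_mul _
  have hF_sum : ∀ t ∈ Ioi (0 : ℝ), 0 < ∑ i, ∑ j, F i j t := fun t ht ↦ by
    have hb : 0 < (4 * t ^ 2)⁻¹ := by have : (0 : ℝ) < t := ht; positivity
    have := mul_pos (exp_pos (-t ^ 2)) (sum_sum_mul_exp_neg_mul_norm_sub_sq_pos hx hv hb)
    simpa only [F, Finset.mul_sum, mul_left_comm (exp (-t ^ 2))] using this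
  have hrepr : ∑ i, ∑ j, v i * v j * exp (-‖x i - x j‖) =
      2 / √π * ∫ t in Ioi 0, ∑ i, ∑ j, F i j t := by
    rw [integral_finsetSum _ fun i _ ↦ integrable_finsetSum _ fun j _ ↦ hF_int i j]
    simp_rw [integral_finsetSum _ fun j _ ↦ hF_int _ j, F, integral_const_mul,
      integral_Ioi_exp_neg_sq_mul_exp_neg_inv_mul_sq (norm_nonneg _), Finset.mul_sum]
    refine Finset.sum_congr rfl fun i _ ↦ Finset.sum_congr rfl fun j _ ↦ ?_
    field_simp
  rw [hrepr]
  refine mul_pos (by positivity) ((setIntegral_pos_iff_support_of_nonneg_ae ?_ ?_).2 ?_)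
  · exact (ae_restrict_iff' measurableSet_Ioi).2 (.of_forall fun t ht ↦ (hF_sum t ht).le)
  · exact integrable_finsetSum _ fun i _ ↦ integrable_finsetSum _ fun j _ ↦ hF_int i j
  · rw [inter_eq_right.2 fun t ht ↦ Function.mem_support.2 (hF_sum t ht).ne', Real.volume_Ioi]
    exact ENNReal.zero_lt_top

theorem posDef_exp_neg_dist_s8 {ι : Type*} [Fintype ι] {x : ι → V} (hx : Function.Injective x) :
    (Matrix.of fun i j ↦ exp (-dist (x i) (x j))).PosDef := by
  refine Matrix.posDef_iff_dotProduct_mulVec.2 ⟨?_, fun v hv ↦ ?_⟩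
  · exact Matrix.IsHermitian.ext fun i j ↦ by simp [dist_comm]
  · refine (sum_sum_mul_exp_neg_norm_sub_pos hx hv).trans_eq ?_
    simp only [dotProduct, Matrix.mulVec, Matrix.of_apply, star_trivial, Finset.mul_sum,
      dist_eq_norm]
    exact Finset.sum_congr rfl fun i _ ↦ Finset.sum_congr rfl fun j _ ↦ by ring

end Laplace

/-- Gluing formula for weighting vectors of a disjoint decomposition.
With `X` indexed by `Fin k ⊕ Fin l`, `Y` the first block and `Ȳ = X \ Y` the second, and
`ζ_X = [[ζ_Y, B], [Bᵀ, ζ_Ȳ]]`, the restrictions of `w_X` satisfy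
`w_X|_Y = (ζ_X/ζ_Ȳ)⁻¹ (𝟙_Y - B w_Ȳ)` and `w_X|_Ȳ = (ζ_X/ζ_Y)⁻¹ (𝟙_Ȳ - Bᵀ w_Y)`. -/
theorem weighting_gluing (n k l : ℕ)
    (q : Fin k ⊕ Fin l → EuclideanSpace ℝ (Fin n)) (hq : Function.Injective q) :
    let ζX : Matrix (Fin k ⊕ Fin l) (Fin k ⊕ Fin l) ℝ :=
      Matrix.of fun a b => Real.exp (-dist (q a) (q b))
    let ζY : Matrix (Fin k) (Fin k) ℝ :=
      Matrix.of fun i j => Real.exp (-dist (q (Sum.inl i)) (q (Sum.inl j)))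
    let B : Matrix (Fin k) (Fin l) ℝ :=
      Matrix.of fun i j => Real.exp (-dist (q (Sum.inl i)) (q (Sum.inr j)))
    let ζYbar : Matrix (Fin l) (Fin l) ℝ :=
      Matrix.of fun i j => Real.exp (-dist (q (Sum.inr i)) (q (Sum.inr j)))
    let wX := ζX⁻¹ *ᵥ fun _ => (1 : ℝ)
    let wY := ζY⁻¹ *ᵥ fun _ => (1 : ℝ)
    let wYbar := ζYbar⁻¹ *ᵥ fun _ => (1 : ℝ)
    (fun i => wX (Sum.inl i))
        = (ζY - B * ζYbar⁻¹ * Bᵀ)⁻¹ *ᵥ ((fun _ => (1 : ℝ)) - B *ᵥ wYbar) ∧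
    (fun j => wX (Sum.inr j))
        = (ζYbar - Bᵀ * ζY⁻¹ * B)⁻¹ *ᵥ ((fun _ => (1 : ℝ)) - Bᵀ *ᵥ wY) := by
  intro ζX ζY B ζYbar wX wY wYbar
  have hX : ζX.PosDef := posDef_exp_neg_dist_s8 hq
  have hblock : ζX = fromBlocks ζY B Bᵀ ζYbar := by
    ext (a | a) (b | b) <;> simp [ζX, ζY, B, ζYbar, dist_comm]
  have hX_det : IsUnit ζX.det := hX.det_pos.ne'.isUnit
  have hY_det : IsUnit ζY.det := (hX.submatrix Sum.inl_injective).det_pos.ne'.isUnit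
  have hYbar_det : IsUnit ζYbar.det := (hX.submatrix Sum.inr_injective).det_pos.ne'.isUnit
  have hw : ζX *ᵥ wX = fun _ ↦ 1 := by
    rw [mulVec_mulVec, mul_nonsing_inv _ hX_det, one_mulVec]
  rw [hblock] at hX_det hw
  rw [← Sum.elim_comp_inl_inr wX, fromBlocks_mulVec] at hw
  have h₁ : ζY *ᵥ (fun i ↦ wX (.inl i)) + B *ᵥ (fun j ↦ wX (.inr j)) = fun _ ↦ 1 :=
    funext fun i ↦ congrFun hw (.inl i)
  have h₂ : Bᵀ *ᵥ (fun i ↦ wX (.inl i)) + ζYbar *ᵥ (fun j ↦ wX (.inr j)) = fun _ ↦ 1 :=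
    funext fun j ↦ congrFun hw (.inr j)
  exact ⟨eq_inv_schur₂₂_mulVec hYbar_det hX_det h₁ h₂, eq_inv_schur₁₁_mulVec hY_det hX_det h₁ h₂⟩
end
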